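/- Let S ∈ ℝ^{N×N} be a symmetric matrix with entries in [0,1], let W_G be the step graphon induced by S over the uniform partition, and for x ∈ ℝ^N let X_G be the induced step graphon signal. Then for every k ≥ 0 and every x ∈ ℝ^N, T_{W_G}^k X_G = N^{-k} · (S^k x)_G. Consequently, if H = Σ_{k=0}^{K} h_k S^k is a graph filter and H' = Σ_{k=0}^{K} h_k N^k T_{W_G}^k is the graphon filter with rescaled taps h_k N^k, then H'(X_G) = (Hx)_G; i.e., graph filtering and graphon filtering of induced signals agree. -/

import Mathlib

/-!
The indicators `χᵢ` of the cells of the uniform partition of `[0,1]` are orthogonal with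
`∫ χᵢ² = 1/N`, so the step kernel `∑ Sᵢⱼ χᵢ(u) χⱼ(v)` sends the step signal of `y` to the step
signal of `N⁻¹ • (y ᵥ* S)`, which is `N⁻¹ • S *ᵥ y` because `S` is symmetric. Hence `y ↦ y_G`
semiconjugates `N⁻¹ • S` to `T_{W_G}`; iterating gives the first claim, and linearity of
`y ↦ y_G` the second.
-/

open MeasureTheory

theorem indicator_one_mul_indicator_one {α : Type*} (s t : Set α) :
    (fun u => s.indicator (1 : α → ℝ) u * t.indicator 1 u) = (s ∩ t).indicator 1 :=
  funext fun u => (congrFun Set.inter_indicator_one u).symm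

section Orthogonal

open Function Matrix

variable {ι α : Type*} [MeasurableSpace α] {μ : Measure α}

theorem integrable_indicator_one_mul_indicator_one [IsFiniteMeasure μ] {s t : Set α}
    (hs : MeasurableSet s) (ht : MeasurableSet t) :
    Integrable (fun u => s.indicator (1 : α → ℝ) u * t.indicator 1 u) μ := by
  rw [indicator_one_mul_indicator_one]
  exact (integrable_const 1).indicator (hs.inter ht)

theorem integral_indicator_one_mul_indicator_one [DecidableEq ι] {s : ι → Set α}
    (hs : Pairwise (Disjoint on s)) (hm : ∀ i, MeasurableSet (s i)) (i l : ι) :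
    ∫ u, (s i).indicator 1 u * (s l).indicator 1 u ∂μ = if i = l then μ.real (s i) else 0 := by
  rw [indicator_one_mul_indicator_one]
  split_ifs with h
  · rw [h, Set.inter_self, integral_indicator_one (hm l)]
  · simp [(hs h).inter_eq]

variable [Fintype ι] [DecidableEq ι] {φ : ι → α → ℝ} {c : ℝ}

theorem integral_mul_sum_of_orthogonal (hint : ∀ i l, Integrable (fun u => φ i u * φ l u) μ)
    (horth : ∀ i l, ∫ u, φ i u * φ l u ∂μ = if i = l then c else 0) (y : ι → ℝ) (i : ι) :
    ∫ u, φ i u * ∑ l, y l * φ l u ∂μ = c * y i := by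
  simp_rw [Finset.mul_sum, mul_left_comm (φ i _)]
  rw [integral_finsetSum _ fun l _ => (hint i l).const_mul (y l)]
  simp [integral_const_mul, horth, mul_comm]

theorem integral_kernel_mul_sum_of_orthogonal
    (hint : ∀ i l, Integrable (fun u => φ i u * φ l u) μ)
    (horth : ∀ i l, ∫ u, φ i u * φ l u ∂μ = if i = l then c else 0)
    (S : Matrix ι ι ℝ) (y ψ : ι → ℝ) :
    ∫ u, (∑ i, ∑ j, S i j * φ i u * ψ j) * ∑ l, y l * φ l u ∂μ =
      ∑ j, (y ᵥ* (c • S)) j * ψ j := by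
  have hsplit : ∀ u, (∑ i, ∑ j, S i j * φ i u * ψ j) * ∑ l, y l * φ l u =
      ∑ i, (∑ j, S i j * ψ j) * (φ i u * ∑ l, y l * φ l u) := fun u => by
    simp_rw [Finset.sum_mul, Finset.mul_sum]
    exact Finset.sum_congr rfl fun _ _ => Finset.sum_congr rfl fun _ _ =>
      Finset.sum_congr rfl fun _ _ => by ring
  have hint' : ∀ i, Integrable (fun u => φ i u * ∑ l, y l * φ l u) μ := fun i => by
    simp_rw [Finset.mul_sum, mul_left_comm (φ i _)]
    exact integrable_finsetSum _ fun l _ => (hint i l).const_mul (y l)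
  simp_rw [hsplit]
  rw [integral_finsetSum _ fun i _ => (hint' i).const_mul _]
  simp only [integral_const_mul, integral_mul_sum_of_orthogonal hint horth]
  simp only [vecMul, dotProduct, Finset.sum_mul]
  rw [Finset.sum_comm]
  exact Finset.sum_congr rfl fun _ _ => Finset.sum_congr rfl fun _ _ => by
    rw [Matrix.smul_apply, smul_eq_mul]
    ring

end Orthogonal

theorem Matrix.mulVec_iterate {n R : Type*} [Fintype n] [DecidableEq n] [CommSemiring R]
    (A : Matrix n n R) (k : ℕ) (y : n → R) : A.mulVec^[k] y = (A ^ k).mulVec y := by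
  induction k with
  | zero => simp
  | succ k ih => rw [Function.iterate_succ_apply', ih, pow_succ', Matrix.mulVec_mulVec]

def uniformPartition (N : ℕ) (i : Fin N) : Set ℝ := Set.Ico ((i : ℝ) / N) (((i : ℝ) + 1) / N)

namespace uniformPartition

variable {N : ℕ}

theorem floor_mul_eq {i : Fin N} {u : ℝ} (hu : u ∈ uniformPartition N i) : ⌊u * N⌋₊ = i := by
  have hN : (0 : ℝ) < N := by exact_mod_cast i.pos
  obtain ⟨hlo, hhi⟩ := hu
  rw [Nat.floor_eq_iff (mul_nonneg ((div_nonneg i.val.cast_nonneg hN.le).trans hlo) hN.le)]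
  exact ⟨(div_le_iff₀ hN).1 hlo, (lt_div_iff₀ hN).1 hhi⟩

open Function in
theorem pairwise_disjoint : Pairwise (Disjoint on uniformPartition N) :=
  fun _ _ hil => Set.disjoint_left.2 fun _ hi hl =>
    hil (Fin.ext ((floor_mul_eq hi).symm.trans (floor_mul_eq hl)))

theorem measurableSet (i : Fin N) : MeasurableSet (uniformPartition N i) := measurableSet_Ico

theorem subset_Icc (i : Fin N) : uniformPartition N i ⊆ Set.Icc 0 1 := by
  have hN : (0 : ℝ) < N := by exact_mod_cast i.pos
  refine Set.Ico_subset_Icc_self.trans (Set.Icc_subset_Icc (by positivity) ?_)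
  rw [div_le_one hN]
  exact_mod_cast i.isLt

theorem volume_real_restrict_Icc (i : Fin N) :
    (volume.restrict (Set.Icc (0 : ℝ) 1)).real (uniformPartition N i) = (N : ℝ)⁻¹ := by
  rw [measureReal_restrict_apply (measurableSet i), Set.inter_eq_left.2 (subset_Icc i),
    uniformPartition, Real.volume_real_Ico, ← sub_div, add_sub_cancel_left, one_div,
    max_eq_left (by positivity)]

theorem integral_indicator_mul_indicator (i l : Fin N) :
    ∫ u in Set.Icc (0 : ℝ) 1,
        (uniformPartition N i).indicator 1 u * (uniformPartition N l).indicator 1 u =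
      if i = l then (N : ℝ)⁻¹ else 0 := by
  rw [integral_indicator_one_mul_indicator_one pairwise_disjoint measurableSet,
    volume_real_restrict_Icc]

end uniformPartition

theorem graphon_filter_of_induced_signal_general (N : ℕ) (hN : 0 < N)
    (S : Matrix (Fin N) (Fin N) ℝ)
    (hS_symm : S.IsSymm)
    (W : ℝ → ℝ → ℝ)
    (hW : ∀ u v, W u v =
      ∑ i : Fin N, ∑ j : Fin N, S i j *
        (Set.Ico ((i : ℝ) / N) (((i : ℝ) + 1) / N)).indicator 1 u *
        (Set.Ico ((j : ℝ) / N) (((j : ℝ) + 1) / N)).indicator 1 v)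
    (XG : (Fin N → ℝ) → ℝ → ℝ)
    (hXG : ∀ (y : Fin N → ℝ) (u : ℝ), XG y u =
      ∑ i : Fin N, y i * (Set.Ico ((i : ℝ) / N) (((i : ℝ) + 1) / N)).indicator 1 u)
    (TW : (ℝ → ℝ) → (ℝ → ℝ))
    (hTW : ∀ (f : ℝ → ℝ) (v : ℝ), TW f v = ∫ u in Set.Icc (0:ℝ) 1, W u v * f u) :
    (∀ (k : ℕ) (x : Fin N → ℝ) (v : ℝ),
      (TW^[k] (XG x)) v = ((N : ℝ))⁻¹ ^ k * XG ((S ^ k).mulVec x) v) ∧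
    (∀ (K : ℕ) (h : ℕ → ℝ) (x : Fin N → ℝ) (v : ℝ),
      ∑ k ∈ Finset.range (K + 1), h k * (N : ℝ) ^ k * (TW^[k] (XG x)) v =
        XG ((∑ k ∈ Finset.range (K + 1), h k • S ^ k).mulVec x) v) := by
  set χ : Fin N → ℝ → ℝ := fun i => (uniformPartition N i).indicator 1
  have hXG_lin : XG = ⇑(Fintype.linearCombination ℝ χ) := funext₂ fun y u => by
    simp only [hXG, uniformPartition, Fintype.linearCombination_apply, Finset.sum_apply,
      Pi.smul_apply, smul_eq_mul, χ]
  have hstep : Function.Semiconj XG ((N : ℝ)⁻¹ • S).mulVec TW := fun y => funext fun v => by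
    rw [hTW, ← Matrix.vecMul_transpose, (hS_symm.smul _).eq]
    simp only [hW, hXG]
    exact (integral_kernel_mul_sum_of_orthogonal
      (fun i l => integrable_indicator_one_mul_indicator_one (uniformPartition.measurableSet i)
        (uniformPartition.measurableSet l))
      uniformPartition.integral_indicator_mul_indicator S y _).symm
  have hiter : ∀ k x, TW^[k] (XG x) = (N : ℝ)⁻¹ ^ k • XG ((S ^ k).mulVec x) := fun k x => by
    rw [← (hstep.iterate_right k) x, Matrix.mulVec_iterate, smul_pow, Matrix.smul_mulVec,
      hXG_lin, map_smul]
  refine ⟨fun k x v => congrFun (hiter k x) v, fun K h x v => ?_⟩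
  simp only [hiter, Pi.smul_apply, smul_eq_mul, Matrix.sum_mulVec, Matrix.smul_mulVec]
  rw [hXG_lin, map_sum, Finset.sum_apply]
  refine Finset.sum_congr rfl fun k _ => ?_
  rw [map_smul, Pi.smul_apply, smul_eq_mul, inv_pow, mul_assoc,
    mul_inv_cancel_left₀ (by positivity)]

/-- For the step graphon `W_G` induced by a symmetric matrix `S` with entries in
`[0,1]` and induced step signals `X_G`: iterated graphon shifts satisfy
`T_{W_G}^k X_G = N^{-k}·(Sᵏx)_G` for all `k ≥ 0`, and consequently the graphon
filter with rescaled taps `h_k N^k` applied to `X_G` equals the step signal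
induced by the graph-filtered signal `(∑_k h_k Sᵏ) x`. -/
theorem graphon_filter_of_induced_signal (N : ℕ) (hN : 0 < N)
    (S : Matrix (Fin N) (Fin N) ℝ)
    (hS_mem : ∀ i j, S i j ∈ Set.Icc (0:ℝ) 1)
    (hS_symm : S.IsSymm)
    (W : ℝ → ℝ → ℝ)
    (hW : ∀ u v, W u v =
      ∑ i : Fin N, ∑ j : Fin N, S i j *
        (Set.Ico ((i : ℝ) / N) (((i : ℝ) + 1) / N)).indicator 1 u *
        (Set.Ico ((j : ℝ) / N) (((j : ℝ) + 1) / N)).indicator 1 v)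
    (XG : (Fin N → ℝ) → ℝ → ℝ)
    (hXG : ∀ (y : Fin N → ℝ) (u : ℝ), XG y u =
      ∑ i : Fin N, y i * (Set.Ico ((i : ℝ) / N) (((i : ℝ) + 1) / N)).indicator 1 u)
    (TW : (ℝ → ℝ) → (ℝ → ℝ))
    (hTW : ∀ (f : ℝ → ℝ) (v : ℝ), TW f v = ∫ u in Set.Icc (0:ℝ) 1, W u v * f u) :
    (∀ (k : ℕ) (x : Fin N → ℝ) (v : ℝ),
      (TW^[k] (XG x)) v = ((N : ℝ))⁻¹ ^ k * XG ((S ^ k).mulVec x) v) ∧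
    (∀ (K : ℕ) (h : ℕ → ℝ) (x : Fin N → ℝ) (v : ℝ),
      ∑ k ∈ Finset.range (K + 1), h k * (N : ℝ) ^ k * (TW^[k] (XG x)) v =
        XG ((∑ k ∈ Finset.range (K + 1), h k • S ^ k).mulVec x) v) :=
  graphon_filter_of_induced_signal_general N hN S hS_symm W hW XG hXG TW hTW
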